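/- arXiv:2307.10668 — 4 statements merged into one kernel-verified Lean document; each statement's English description precedes it below -/
import Mathlib

section
/- For d ≥ 1 and n ≥ 1, the number of lattice points k ∈ ℤ^d with |k_1| + ... + |k_d| = n equals the sum over j from 0 to d of C(d, j) * (C(d + n - j, d) - C(d + n - 1 - j, d)). -/
open Finset

lemma card_piAntidiag_univ (d s : ℕ) :
    (Finset.piAntidiag (univ : Finset (Fin d)) s).card = (d + s - 1).choose s := by
  classical
  rw [← Finset.map_sym_eq_piAntidiag, Finset.card_map]
  have h : (univ : Finset (Fin d)).sym s = (univ : Finset (Sym (Fin d) s)) := by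
    ext m; simp [Finset.mem_sym_iff]
  rw [h, Finset.card_univ, Sym.card_sym_eq_choose, Fintype.card_fin]

lemma choose_arith (d n j : ℕ) (hd : 1 ≤ d) :
    (if j ≤ n then (d + (n - j) - 1).choose (n - j) else 0) =
      (d + n - j).choose d - (d + n - 1 - j).choose d := by
  split_ifs with h
  · obtain ⟨a, rfl⟩ : ∃ a, d = a + 1 := ⟨d - 1, by omega⟩
    obtain ⟨s, rfl⟩ : ∃ s, n = s + j := ⟨n - j, by omega⟩
    rcases Nat.eq_zero_or_pos s with rfl | hs
    · simp [Nat.choose_eq_zero_of_lt (show a < a + 1 by omega)]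
    · obtain ⟨b, rfl⟩ : ∃ b, s = b + 1 := ⟨s - 1, by omega⟩
      have e1 : a + 1 + (b + 1 + j) - j = a + b + 2 := by omega
      have e2 : a + 1 + (b + 1 + j) - 1 - j = a + b + 1 := by omega
      have e3 : a + 1 + (b + 1 + j - j) - 1 = a + b + 1 := by omega
      have e4 : b + 1 + j - j = b + 1 := by omega
      rw [e1, e2, e3, e4]
      have pascal : (a + b + 2).choose (a + 1) =
          (a + b + 1).choose a + (a + b + 1).choose (a + 1) :=
        Nat.choose_succ_succ (a + b + 1) a
      have symm : (a + b + 1).choose (b + 1) = (a + b + 1).choose a := by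
        have h1 := Nat.choose_symm (n := a + b + 1) (k := b + 1) (by omega)
        have h2 : a + b + 1 - (b + 1) = a := by omega
        rw [h2] at h1
        omega
      omega
  · have h1 : (d + n - j).choose d = 0 := Nat.choose_eq_zero_of_lt (by omega)
    have h2 : (d + n - 1 - j).choose d = 0 := Nat.choose_eq_zero_of_lt (by omega)
    omega

/-- The number of lattice points of `ℤ^d` on the ℓ¹-sphere of radius `n`. -/
theorem card_l1_sphere (d n : ℕ) (hd : 1 ≤ d) (hn : 1 ≤ n) :
    Nat.card {k : Fin d → ℤ // (∑ i, (k i).natAbs) = n} =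
      ∑ j ∈ Finset.range (d + 1),
        Nat.choose d j * (Nat.choose (d + n - j) d - Nat.choose (d + n - 1 - j) d) := by
  classical
  set P : Finset (Σ _ : Finset (Fin d), Fin d → ℕ) :=
    univ.powerset.sigma
      (fun J => if J.card ≤ n then Finset.piAntidiag univ (n - J.card) else ∅) with hP
  have hmem : ∀ p : (Σ _ : Finset (Fin d), Fin d → ℕ),
      p ∈ P ↔ (∑ i, p.2 i) + p.1.card = n := by
    rintro ⟨J, m⟩
    simp only [hP, Finset.mem_sigma, Finset.mem_powerset, Finset.subset_univ, true_and]
    have hagree : univ.sum m = ∑ i, m i := rfl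
    split_ifs with h
    · rw [Finset.mem_piAntidiag]
      constructor
      · rintro ⟨h1, -⟩; omega
      · intro h1; exact ⟨by omega, fun i _ => Finset.mem_univ i⟩
    · simp only [Finset.notMem_empty, false_iff]
      omega
  have key : ∀ (k : Fin d → ℤ) (i : Fin d),
      ((k i).natAbs - if k i < 0 then 1 else 0) + (if k i < 0 then 1 else 0) = (k i).natAbs := by
    intro k i; split_ifs with h <;> omega
  let e : {k : Fin d → ℤ // (∑ i, (k i).natAbs) = n} ≃ {p // p ∈ P} :=
    { toFun := fun k => ⟨⟨univ.filter (fun i => k.1 i < 0),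
        fun i => (k.1 i).natAbs - if k.1 i < 0 then 1 else 0⟩, by
        rw [hmem]
        simp only [Finset.card_filter]
        rw [← Finset.sum_add_distrib]
        exact (Finset.sum_congr rfl fun i _ => key k.1 i).trans k.2⟩
      invFun := fun p => ⟨fun i => if i ∈ p.1.1 then -(p.1.2 i + 1) else (p.1.2 i : ℤ), by
        have h := (hmem p.1).1 p.2
        rw [← h]
        have hc : p.1.1.card = ∑ i, if i ∈ p.1.1 then 1 else 0 := by
          simp [Finset.sum_ite_mem]
        rw [hc, ← Finset.sum_add_distrib]
        refine Finset.sum_congr rfl fun i _ => ?_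
        by_cases hi : i ∈ p.1.1
        · simp only [if_pos hi]
          omega
        · simp only [if_neg hi]
          simp⟩
      left_inv := by
        rintro ⟨k, hk⟩
        ext i
        simp only [Finset.mem_filter, Finset.mem_univ, true_and]
        split_ifs with h <;> omega
      right_inv := by
        rintro ⟨⟨J, m⟩, hp⟩
        refine Subtype.ext (Sigma.ext ?_ ?_)
        · ext i
          simp only [Finset.mem_filter, Finset.mem_univ, true_and]
          by_cases h : i ∈ J <;> simp [h] <;> omega
        · refine heq_of_eq (funext fun i => ?_)
          by_cases h : i ∈ J
          · simp only [h, if_true]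
            have hlt : (-(↑(m i) + 1) : ℤ) < 0 := by omega
            rw [if_pos hlt]
            omega
          · simp only [h, if_false]
            have hlt : ¬((m i : ℤ) < 0) := by omega
            rw [if_neg hlt]
            simp }
  rw [Nat.card_congr e, Nat.card_eq_finsetCard P, hP, Finset.card_sigma,
    Finset.sum_powerset]
  simp only [Finset.card_univ, Fintype.card_fin]
  refine Finset.sum_congr rfl fun j hj => ?_
  have hstep : ∀ J ∈ Finset.powersetCard j (univ : Finset (Fin d)),
      (if J.card ≤ n then Finset.piAntidiag (univ : Finset (Fin d)) (n - J.card) else ∅).card =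
        if j ≤ n then (d + (n - j) - 1).choose (n - j) else 0 := by
    intro J hJ
    have hc : J.card = j := (Finset.mem_powersetCard.1 hJ).2
    rw [hc]
    split_ifs with h
    · exact card_piAntidiag_univ d (n - j)
    · simp
  rw [Finset.sum_congr rfl hstep, Finset.sum_const, Finset.card_powersetCard,
    Finset.card_univ, Fintype.card_fin, smul_eq_mul, choose_arith d n j hd]
end

section
/- Let μ be a finite Borel measure on ℝ^d with all moments finite and with positive definite moment matrix M_n(μ) for degree n. Then for every ξ ∈ ℝ^d, the infimum of ∫ p² dμ over polynomials p of degree at most n with p(ξ) = 1 equals (v_n(ξ)^T M_n(μ)^{-1} v_n(ξ))^{-1}, where v_n(ξ) is the vector of monomials of degree at most n evaluated at ξ. -/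
open MeasureTheory Finset Matrix

/-- Multi-indices `α` with `|α| ≤ n` in `d` variables. -/
abbrev MIdx (d n : ℕ) := {α : Fin d → Fin (n + 1) // (∑ i, (α i : ℕ)) ≤ n}

/-- The monomial `x^α`. -/
def mono (d n : ℕ) (x : Fin d → ℝ) (a : MIdx d n) : ℝ := ∏ i, x i ^ (a.1 i : ℕ)

/-- The moment matrix `M_n(μ)(α,β) = ∫ x^{α+β} dμ`. -/
noncomputable def momentMatrix (d n : ℕ) (μ : Measure (Fin d → ℝ)) :
    Matrix (MIdx d n) (MIdx d n) ℝ :=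
  fun a b => ∫ x, ∏ i, x i ^ ((a.1 i : ℕ) + (b.1 i : ℕ)) ∂μ

/-- Variational characterization of the Christoffel function: the infimum of `∫ p² dμ`
over polynomials `p` of degree at most `n` with `p(ξ) = 1` equals
`(v_n(ξ)ᵀ M_n(μ)⁻¹ v_n(ξ))⁻¹`. -/
theorem christoffel_eq_inv_quadratic_form (d n : ℕ)
    (μ : Measure (Fin d → ℝ)) [IsFiniteMeasure μ]
    (hint : ∀ α : Fin d → ℕ, Integrable (fun x => ∏ i, x i ^ α i) μ)
    (hM : (momentMatrix d n μ).PosDef) (ξ : Fin d → ℝ) :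
    (⨅ p : {c : MIdx d n → ℝ // (∑ a, c a * mono d n ξ a) = 1},
        ∫ x, (∑ a, p.1 a * mono d n x a) ^ 2 ∂μ) =
      ((fun a => mono d n ξ a) ⬝ᵥ ((momentMatrix d n μ)⁻¹ *ᵥ fun a => mono d n ξ a))⁻¹ := by
  set M := momentMatrix d n μ with hMdef
  set v : MIdx d n → ℝ := fun a => mono d n ξ a with hv
  -- integral of square is the quadratic form
  have key : ∀ c : MIdx d n → ℝ,
      ∫ x, (∑ a, c a * mono d n x a) ^ 2 ∂μ = c ⬝ᵥ (M *ᵥ c) := by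
    intro c
    have h1 : ∀ x : Fin d → ℝ, (∑ a, c a * mono d n x a) ^ 2 =
        ∑ a : MIdx d n, ∑ b : MIdx d n,
          c a * c b * ∏ i, x i ^ ((a.1 i : ℕ) + (b.1 i : ℕ)) := by
      intro x
      rw [sq, Finset.sum_mul_sum]
      refine Finset.sum_congr rfl fun a _ => Finset.sum_congr rfl fun b _ => ?_
      simp only [mono, pow_add, Finset.prod_mul_distrib]
      ring
    simp_rw [h1]
    rw [integral_finset_sum _ (fun a _ => ?_)]
    · rw [Finset.sum_congr rfl fun a (_ : a ∈ Finset.univ) =>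
        integral_finset_sum _ (fun b _ => ((hint _).const_mul (c a * c b)))]
      simp only [dotProduct, mulVec, MeasureTheory.integral_const_mul, hMdef,
        momentMatrix, Finset.mul_sum]
      refine Finset.sum_congr rfl fun a _ => Finset.sum_congr rfl fun b _ => ?_
      ring
    · exact integrable_finset_sum _ (fun b _ => ((hint _).const_mul (c a * c b)))
  have hdet : IsUnit M.det := isUnit_iff_ne_zero.mpr hM.det_pos.ne'
  have hMsymm : ∀ (x y : MIdx d n → ℝ), x ⬝ᵥ (M *ᵥ y) = y ⬝ᵥ (M *ᵥ x) := by
    intro x y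
    rw [dotProduct_mulVec, dotProduct_comm, ← mulVec_transpose]
    congr 1
    have : Mᵀ = M := by
      ext a b
      simp only [transpose_apply, hMdef, momentMatrix]
      congr 1; ext x; congr 1; ext i; rw [add_comm]
    rw [this]
  set w : MIdx d n → ℝ := M⁻¹ *ᵥ v with hw
  have hMw : M *ᵥ w = v := by
    rw [hw, mulVec_mulVec, Matrix.mul_nonsing_inv _ hdet, one_mulVec]
  set q : ℝ := v ⬝ᵥ (M⁻¹ *ᵥ v) with hq
  have hqw : q = w ⬝ᵥ (M *ᵥ w) := by rw [hq, ← hw, ← hMw, dotProduct_comm]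
  -- v ≠ 0 since its entry at the zero multi-index is 1
  have hvne : v ≠ 0 := by
    intro h0
    have : v ⟨fun _ => 0, by simp⟩ = 0 := by rw [h0]; rfl
    simp [hv, mono] at this
  have hwne : w ≠ 0 := by
    intro h0
    apply hvne
    rw [← hMw, h0, mulVec_zero]
  have hqpos : 0 < q := by
    rw [hqw]
    have := hM.dotProduct_mulVec_pos hwne
    simpa using this
  -- lower bound for feasible c
  have lb : ∀ c : MIdx d n → ℝ, (∑ a, c a * mono d n ξ a) = 1 → q⁻¹ ≤ c ⬝ᵥ (M *ᵥ c) := by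
    intro c hc
    have hcv : c ⬝ᵥ v = 1 := by simpa [dotProduct, hv] using hc
    have hcMw : c ⬝ᵥ (M *ᵥ w) = 1 := by rw [hMw]; exact hcv
    have expand : 0 ≤ (c - q⁻¹ • w) ⬝ᵥ (M *ᵥ (c - q⁻¹ • w)) := by
      rcases eq_or_ne (c - q⁻¹ • w) 0 with h | h
      · rw [h]; simp
      · have := hM.dotProduct_mulVec_pos h
        simp only [star_trivial] at this
        exact this.le
    have hswap : w ⬝ᵥ (M *ᵥ c) = 1 := by rw [hMsymm]; exact hcMw
    have heq : (c - q⁻¹ • w) ⬝ᵥ (M *ᵥ (c - q⁻¹ • w)) =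
        c ⬝ᵥ (M *ᵥ c) - q⁻¹ := by
      rw [mulVec_sub, mulVec_smul, sub_dotProduct, smul_dotProduct,
        dotProduct_sub, dotProduct_sub, dotProduct_smul, dotProduct_smul,
        hcMw, hswap, ← hqw]
      simp only [smul_eq_mul]
      field_simp
      ring
    rw [heq] at expand
    linarith
  -- optimal coefficients
  have hfeas : (∑ a, (q⁻¹ • w) a * mono d n ξ a) = 1 := by
    have : w ⬝ᵥ v = q := by rw [hq, ← hw, dotProduct_comm]
    have h2 : (∑ a, w a * mono d n ξ a) = q := by simpa [dotProduct, hv] using this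
    simp only [Pi.smul_apply, smul_eq_mul, mul_assoc]
    rw [← Finset.mul_sum, h2, inv_mul_cancel₀ hqpos.ne']
  have hval : (q⁻¹ • w) ⬝ᵥ (M *ᵥ (q⁻¹ • w)) = q⁻¹ := by
    rw [mulVec_smul, dotProduct_smul, smul_dotProduct, ← hqw]
    simp only [smul_eq_mul]
    field_simp
  haveI : Nonempty {c : MIdx d n → ℝ // (∑ a, c a * mono d n ξ a) = 1} :=
    ⟨⟨q⁻¹ • w, hfeas⟩⟩
  rw [show ((fun a => mono d n ξ a) ⬝ᵥ (M⁻¹ *ᵥ fun a => mono d n ξ a))⁻¹ = q⁻¹ from rfl]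
  apply le_antisymm
  · have hbdd : BddBelow (Set.range fun p : {c : MIdx d n → ℝ //
        (∑ a, c a * mono d n ξ a) = 1} => ∫ x, (∑ a, p.1 a * mono d n x a) ^ 2 ∂μ) :=
      ⟨q⁻¹, by
        rintro x ⟨p, rfl⟩
        show q⁻¹ ≤ ∫ x, (∑ a, p.1 a * mono d n x a) ^ 2 ∂μ
        rw [key]; exact lb p.1 p.2⟩
    have h := ciInf_le hbdd (⟨q⁻¹ • w, hfeas⟩ : {c : MIdx d n → ℝ //
        (∑ a, c a * mono d n ξ a) = 1})
    refine h.trans_eq ?_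
    rw [key]; exact hval
  · refine le_ciInf fun p => ?_
    show q⁻¹ ≤ ∫ x, (∑ a, p.1 a * mono d n x a) ^ 2 ∂μ
    rw [key]; exact lb p.1 p.2
end

section
/- Let Ω ⊂ ℝ^d be compact, G a finite set of polynomials with g ≥ 0 on Ω for all g ∈ G, and μ a measure on Ω such that for each g ∈ G and n the moment matrix of g·μ is positive definite. Suppose that for all n greater than some n₀, ∑_{g∈G} s(n - t_g) = ∑_{g∈G} g(x) · Λ_{n-t_g}^{g·μ}(x)^{-1} for all x ∈ ℝ^d, where s(k) = C(d+k, d). Then for every n > n₀, inf_{x∈Ω} Λ_n^μ(x) ≥ (∑_{g∈G} s(n - t_g))^{-1}, with equality at any point x ∈ Ω where g(x) = 0 for all g ∈ G with g ≠ 1. -/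
open MvPolynomial Finset

/-- If the generalized Pell identity
`∑_{g∈G} s(n-t_g) = ∑_{g∈G} g(x)·Λ_{n-t_g}^{g·μ}(x)⁻¹` holds for all `n > n₀`, then on `Ω`
the Christoffel function `Λ_n^μ` is bounded below by `(∑_{g∈G} s(n-t_g))⁻¹`, with equality
at any point of `Ω` where all nonconstant generators vanish.  Here `K g m x` denotes the
reciprocal Christoffel function `Λ_m^{g·μ}(x)⁻¹` (a sum of squares of an orthonormal basis,
hence nonnegative everywhere, and positive for `g = 1`), `t g = ⌈deg g / 2⌉` and
`s k = C(d+k, d)`. -/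
theorem christoffel_lower_bound_of_pell (d : ℕ) (Ω : Set (Fin d → ℝ)) (hΩ : IsCompact Ω)
    (G : Finset (MvPolynomial (Fin d) ℝ)) (h1 : (1 : MvPolynomial (Fin d) ℝ) ∈ G)
    (hGnonneg : ∀ g ∈ G, ∀ x ∈ Ω, 0 ≤ eval x g)
    (K : MvPolynomial (Fin d) ℝ → ℕ → (Fin d → ℝ) → ℝ)
    (hKnonneg : ∀ g ∈ G, ∀ m : ℕ, ∀ x : Fin d → ℝ, 0 ≤ K g m x)
    (hK1pos : ∀ m : ℕ, ∀ x : Fin d → ℝ, 0 < K 1 m x)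
    (n₀ : ℕ)
    (hPell : ∀ n > n₀, ∀ x : Fin d → ℝ,
      (∑ g ∈ G, (Nat.choose (d + (n - (g.totalDegree + 1) / 2)) d : ℝ)) =
        ∑ g ∈ G, eval x g * K g (n - (g.totalDegree + 1) / 2) x) :
    ∀ n > n₀,
      (∀ x ∈ Ω,
        ((∑ g ∈ G, (Nat.choose (d + (n - (g.totalDegree + 1) / 2)) d : ℝ))⁻¹ ≤ (K 1 n x)⁻¹)) ∧
      (∀ x ∈ Ω, (∀ g ∈ G, g ≠ 1 → eval x g = 0) →
        (K 1 n x)⁻¹ =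
          (∑ g ∈ G, (Nat.choose (d + (n - (g.totalDegree + 1) / 2)) d : ℝ))⁻¹) := by
  intro n hn
  have hterm1 : ∀ x : Fin d → ℝ,
      eval x (1 : MvPolynomial (Fin d) ℝ) *
        K 1 (n - ((1 : MvPolynomial (Fin d) ℝ).totalDegree + 1) / 2) x = K 1 n x := by
    intro x
    simp [MvPolynomial.totalDegree_one]
  constructor
  · intro x hx
    have hS := hPell n hn x
    have hle : K 1 n x ≤ ∑ g ∈ G, eval x g * K g (n - (g.totalDegree + 1) / 2) x := by
      rw [← hterm1 x]
      exact Finset.single_le_sum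
        (f := fun g => eval x g * K g (n - (g.totalDegree + 1) / 2) x)
        (fun g hg => mul_nonneg (hGnonneg g hg x hx) (hKnonneg g hg _ x)) h1
    rw [hS]
    exact inv_anti₀ (hK1pos n x) hle
  · intro x hx hvan
    have hS := hPell n hn x
    have heq : (∑ g ∈ G, eval x g * K g (n - (g.totalDegree + 1) / 2) x) = K 1 n x := by
      rw [← hterm1 x]
      exact Finset.sum_eq_single_of_mem _ h1
        (fun g hg hne => by rw [hvan g hg hne, zero_mul])
    rw [hS, heq]
end

section
/- For θ ∈ [0, π], n ≥ 1, and d ≥ 1, define H_{n,d}(cos θ) = 2(-1)^{⌊(d-1)/2⌋}(sin θ)^{d-1} · (-sin(nθ)) if d is even and 2(-1)^{⌊(d-1)/2⌋}(sin θ)^{d-1} · cos(nθ) if d is odd. Then the formal identity ∑_{n≥0} h_{n,d} r^n /(d-1)! = (1+r)^d/(1-r)^d holds, where h_{n,d} = H_{n,d}^{(d-1)}(1) denotes the (d-1)-st derivative at u = 1 of H_{n,d} viewed as a function of u = cos θ, and h_{0,d}/(d-1)! = 1. -/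
open Polynomial PowerSeries Real

lemma pas (m k : ℕ) : m.choose k + 2 * (m+1).choose (k+2) = (m+2).choose (k+2) + m.choose (k+2) := by
  have h1 : (m+2).choose (k+2) = (m+1).choose (k+1) + (m+1).choose (k+2) := Nat.choose_succ_succ _ _
  have h2 : (m+1).choose (k+1) = m.choose k + m.choose (k+1) := Nat.choose_succ_succ _ _
  have h3 : (m+1).choose (k+2) = m.choose (k+1) + m.choose (k+2) := Nat.choose_succ_succ _ _
  omega

lemma ttwoX (u v : ℝ[X]) : Polynomial.taylor (1:ℝ) (2*Polynomial.X*u - v)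
    = 2*(Polynomial.X+1)*(Polynomial.taylor 1 u) - Polynomial.taylor 1 v := by
  rw [map_sub, taylor_mul]
  simp [taylor_apply]

lemma coeff_rec (u v : ℝ[X]) (j : ℕ) :
    (Polynomial.taylor (1:ℝ) (2*Polynomial.X*u - v)).coeff (j+1)
    = 2 * (Polynomial.taylor (1:ℝ) u).coeff j + 2 * (Polynomial.taylor (1:ℝ) u).coeff (j+1)
      - (Polynomial.taylor (1:ℝ) v).coeff (j+1) := by
  rw [ttwoX]
  have : (2*(Polynomial.X+1)*(Polynomial.taylor (1:ℝ) u) : ℝ[X])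
      = 2*(Polynomial.X*(Polynomial.taylor (1:ℝ) u)) + 2*(Polynomial.taylor (1:ℝ) u) := by ring
  rw [Polynomial.coeff_sub, this, Polynomial.coeff_add, Polynomial.coeff_ofNat_mul,
    Polynomial.coeff_ofNat_mul, Polynomial.coeff_X_mul]

lemma coeff_rec0 (u v : ℝ[X]) :
    (Polynomial.taylor (1:ℝ) (2*Polynomial.X*u - v)).coeff 0
    = 2 * (Polynomial.taylor (1:ℝ) u).coeff 0 - (Polynomial.taylor (1:ℝ) v).coeff 0 := by
  rw [ttwoX]
  have : (2*(Polynomial.X+1)*(Polynomial.taylor (1:ℝ) u) : ℝ[X])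
      = 2*(Polynomial.X*(Polynomial.taylor (1:ℝ) u)) + 2*(Polynomial.taylor (1:ℝ) u) := by ring
  rw [Polynomial.coeff_sub, this, Polynomial.coeff_add, Polynomial.coeff_ofNat_mul,
    Polynomial.coeff_ofNat_mul, Polynomial.mul_coeff_zero, Polynomial.coeff_X_zero]
  ring

lemma tU (n : ℕ) : ∀ j : ℕ, (Polynomial.taylor (1:ℝ) (Polynomial.Chebyshev.U ℝ n)).coeff j
    = 2^j * ((n+j+1).choose (2*j+1) : ℝ) := by
  induction n using Nat.twoStepInduction with
  | zero =>
    intro j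
    rw [show ((0:ℕ):ℤ) = 0 from rfl, Polynomial.Chebyshev.U_zero]
    match j with
    | 0 => simp
    | j+1 =>
      rw [Nat.choose_eq_zero_of_lt (by omega)]
      simp [Polynomial.coeff_one]
  | one =>
    intro j
    rw [show ((1:ℕ):ℤ) = 1 from rfl, Polynomial.Chebyshev.U_one]
    have ht : Polynomial.taylor (1:ℝ) (2*Polynomial.X) = 2*Polynomial.X+2 := by
      have := ttwoX 1 0
      simp only [mul_one, map_zero, sub_zero, taylor_one, Polynomial.C_1] at this
      rw [this]
      ring
    rw [ht]
    match j with
    | 0 => norm_num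
    | 1 => norm_num
    | j+2 =>
      rw [Nat.choose_eq_zero_of_lt (by omega)]
      simp [Polynomial.coeff_ofNat_mul, Polynomial.coeff_X]
  | more n ih2 ih1 =>
    intro j
    have hcast : ((n+2:ℕ):ℤ) = ((n:ℕ):ℤ) + 2 := by push_cast; ring
    have hc1 : ((n+1:ℕ):ℤ) = ((n:ℕ):ℤ) + 1 := by push_cast; ring
    rw [hcast, Polynomial.Chebyshev.U_add_two]
    match j with
    | 0 =>
      rw [coeff_rec0, ← hc1, ih1 0, ih2 0]
      push_cast [Nat.choose_one_right]
      ring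
    | j+1 =>
      rw [coeff_rec, ← hc1, ih1 j, ih1 (j+1), ih2 (j+1)]
      simp only [show n+1+(j+1)+1 = n+j+3 by omega, show n+(j+1)+1 = n+j+2 by omega,
        show n+1+j+1 = n+j+2 by omega, show n+2+(j+1)+1 = n+j+4 by omega,
        show 2*(j+1)+1 = 2*j+3 by omega]
      have key := pas (n+j+2) (2*j+1)
      rw [show n+j+2+1 = n+j+3 by omega, show n+j+2+2 = n+j+4 by omega,
        show 2*j+1+2 = 2*j+3 by omega] at key
      have key' := congrArg (Nat.cast : ℕ → ℝ) key
      push_cast at key'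
      linear_combination (2:ℝ)^(j+1) * key'

lemma tT (n : ℕ) : ∀ j : ℕ, (Polynomial.taylor (1:ℝ) (Polynomial.Chebyshev.T ℝ ((n:ℤ)+1))).coeff j
    = 2^j * (((n+j+1).choose (2*j) : ℝ) + ((n+j).choose (2*j) : ℝ)) / 2 := by
  induction n using Nat.twoStepInduction with
  | zero =>
    intro j
    rw [show ((0:ℕ):ℤ)+1 = 1 by norm_num, Polynomial.Chebyshev.T_one, taylor_X]
    match j with
    | 0 => norm_num
    | 1 => norm_num [Polynomial.coeff_one, Polynomial.coeff_X]
    | j+2 =>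
      rw [Nat.choose_eq_zero_of_lt (by omega), Nat.choose_eq_zero_of_lt (by omega)]
      simp [Polynomial.coeff_X, Polynomial.coeff_C, Polynomial.coeff_one]
  | one =>
    intro j
    rw [show ((1:ℕ):ℤ)+1 = 2 by norm_num, Polynomial.Chebyshev.T_two]
    have ht : Polynomial.taylor (1:ℝ) (2*Polynomial.X^2 - 1)
        = 2*Polynomial.X^2 + 4*Polynomial.X + 1 := by
      rw [taylor_apply]
      simp only [Polynomial.sub_comp, Polynomial.mul_comp, Polynomial.pow_comp,
        Polynomial.X_comp, Polynomial.one_comp, Polynomial.ofNat_comp, Polynomial.C_1]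
      ring
    rw [ht]
    match j with
    | 0 => norm_num [Polynomial.coeff_one, Polynomial.coeff_X, Polynomial.coeff_X_pow]
    | 1 => norm_num [Polynomial.coeff_one, Polynomial.coeff_X, Polynomial.coeff_X_pow]
    | 2 => norm_num [Polynomial.coeff_one, Polynomial.coeff_X, Polynomial.coeff_X_pow]
    | j+3 =>
      rw [Nat.choose_eq_zero_of_lt (by omega), Nat.choose_eq_zero_of_lt (by omega)]
      simp only [Polynomial.coeff_add, Polynomial.coeff_ofNat_mul, Polynomial.coeff_X_pow,
        Polynomial.coeff_X, Polynomial.coeff_one]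
      norm_num
      omega
  | more n ih2 ih1 =>
    intro j
    have hcast : ((n+2:ℕ):ℤ)+1 = (((n:ℕ):ℤ)+1) + 2 := by push_cast; ring
    have hc1 : ((n+1:ℕ):ℤ)+1 = ((n:ℕ):ℤ)+1+1 := by push_cast; ring
    rw [hcast, Polynomial.Chebyshev.T_add_two]
    have hT1 : ∀ j : ℕ, (Polynomial.taylor (1:ℝ)
        (Polynomial.Chebyshev.T ℝ (((n:ℕ):ℤ)+1+1))).coeff j
        = 2^j * (((n+1+j+1).choose (2*j) : ℝ) + ((n+1+j).choose (2*j) : ℝ)) / 2 := by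
      intro j; rw [← hc1]; exact ih1 j
    match j with
    | 0 =>
      rw [coeff_rec0, hT1 0, ih2 0]
      norm_num
    | j+1 =>
      rw [coeff_rec, hT1 j, hT1 (j+1), ih2 (j+1)]
      simp only [show n+1+(j+1)+1 = n+j+3 by omega, show n+1+(j+1) = n+j+2 by omega,
        show n+(j+1)+1 = n+j+2 by omega, show n+(j+1) = n+j+1 by omega,
        show n+1+j+1 = n+j+2 by omega, show n+1+j = n+j+1 by omega,
        show n+2+(j+1)+1 = n+j+4 by omega, show n+2+(j+1) = n+j+3 by omega,
        show 2*(j+1) = 2*j+2 by omega]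
      have key1 := pas (n+j+2) (2*j)
      have key2 := pas (n+j+1) (2*j)
      rw [show n+j+2+1 = n+j+3 by omega, show n+j+2+2 = n+j+4 by omega] at key1
      rw [show n+j+1+1 = n+j+2 by omega, show n+j+1+2 = n+j+3 by omega] at key2
      have key1' := congrArg (Nat.cast : ℕ → ℝ) key1
      have key2' := congrArg (Nat.cast : ℕ → ℝ) key2
      push_cast at key1' key2'
      linear_combination (2:ℝ)^j * key1' + (2:ℝ)^j * key2'

lemma psA (k n : ℕ) : (PowerSeries.coeff (R := ℝ) n)
    ((PowerSeries.invOneSubPow ℝ (2*k+1)).val * (PowerSeries.X:ℝ⟦X⟧)^k)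
    = ((n+k).choose (2*k) : ℝ) := by
  rw [PowerSeries.coeff_mul_X_pow', PowerSeries.invOneSubPow_val_succ_eq_mk_add_choose]
  by_cases h : k ≤ n
  · rw [if_pos h, PowerSeries.coeff_mk, show 2*k+(n-k) = n+k by omega]
  · rw [if_neg h, Nat.choose_eq_zero_of_lt (by omega), Nat.cast_zero]

lemma psB (k n : ℕ) : (PowerSeries.coeff (R := ℝ) n)
    ((PowerSeries.invOneSubPow ℝ (2*k+2)).val * (PowerSeries.X:ℝ⟦X⟧)^(k+1))
    = ((n+k).choose (2*k+1) : ℝ) := by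
  rw [show 2*k+2 = (2*k+1)+1 by omega, PowerSeries.coeff_mul_X_pow',
    PowerSeries.invOneSubPow_val_succ_eq_mk_add_choose]
  by_cases h : k+1 ≤ n
  · rw [if_pos h, PowerSeries.coeff_mk, show 2*k+1+(n-(k+1)) = n+k by omega]
  · rw [if_neg h, Nat.choose_eq_zero_of_lt (by omega), Nat.cast_zero]

lemma psC (k n : ℕ) : (PowerSeries.coeff (R := ℝ) n)
    ((PowerSeries.invOneSubPow ℝ (2*k+1)).val * (PowerSeries.X:ℝ⟦X⟧)^(k+1))
    = if n = 0 then 0 else ((n-1+k).choose (2*k) : ℝ) := by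
  rw [PowerSeries.coeff_mul_X_pow', PowerSeries.invOneSubPow_val_succ_eq_mk_add_choose]
  by_cases h : k+1 ≤ n
  · rw [if_pos h, if_neg (by omega), PowerSeries.coeff_mk, show 2*k+(n-(k+1)) = n-1+k by omega]
  · rw [if_neg h]
    by_cases h0 : n = 0
    · rw [if_pos h0]
    · rw [if_neg h0, Nat.choose_eq_zero_of_lt (by omega), Nat.cast_zero]

lemma taylor_pow (r : ℝ) (p : ℝ[X]) (n : ℕ) :
    Polynomial.taylor r (p^n) = (Polynomial.taylor r p)^n := by
  induction n with
  | zero => simp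
  | succ n ih => rw [pow_succ, taylor_mul, ih, pow_succ]

lemma keycoeff (e e' : ℕ) (q : ℝ[X]) :
    (Polynomial.taylor (1:ℝ) (2*((Polynomial.X^2-1)^e * q))).coeff (e+e') =
    ∑ i ∈ Finset.range (e'+1),
      2 * (2^(e-i) * (e.choose i : ℝ)) * (Polynomial.taylor (1:ℝ) q).coeff (e'-i) := by
  have h2 : ∀ w : ℝ[X], Polynomial.taylor (1:ℝ) (2*w) = 2 * Polynomial.taylor 1 w := by
    intro w
    rw [two_mul, map_add, two_mul]
  rw [h2, taylor_mul, taylor_pow]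
  have hx2 : Polynomial.taylor (1:ℝ) (Polynomial.X^2-1)
      = Polynomial.X * (Polynomial.X + Polynomial.C 2) := by
    rw [map_sub, show (Polynomial.X^2 : ℝ[X]) = Polynomial.X*Polynomial.X by ring,
      taylor_mul, taylor_X, taylor_one, Polynomial.C_1,
      map_ofNat Polynomial.C 2]
    ring
  rw [hx2, mul_pow, mul_assoc]
  rw [show e+e' = e'+e by omega, Polynomial.coeff_ofNat_mul, Polynomial.coeff_X_pow_mul]
  rw [Polynomial.coeff_mul, Finset.Nat.sum_antidiagonal_eq_sum_range_succ_mk,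
    Finset.mul_sum]
  refine Finset.sum_congr rfl fun i _ => ?_
  rw [Polynomial.coeff_X_add_C_pow]
  ring

lemma series_odd (k : ℕ) (h : ℕ → ℝ) (h0 : h 0 = 1)
    (hs : ∀ m : ℕ, h (m+1) = ∑ i ∈ Finset.range (k+1),
      2*(2^(k-i) * (k.choose i : ℝ)) *
        (2^(k-i) * (((m+(k-i)+1).choose (2*(k-i)) : ℝ) + ((m+(k-i)).choose (2*(k-i)) : ℝ))/2)) :
    PowerSeries.mk h * (1 - PowerSeries.X)^(2*k+1) = (1 + PowerSeries.X)^(2*k+1) := by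
  have hmk : PowerSeries.mk h = ∑ j ∈ Finset.range (k+1),
      PowerSeries.C (R := ℝ) ((k.choose j : ℝ) * 4^j) *
        ((PowerSeries.invOneSubPow ℝ (2*j+1)).val *
          ((PowerSeries.X:ℝ⟦X⟧)^j + (PowerSeries.X:ℝ⟦X⟧)^(j+1))) := by
    ext n
    rw [PowerSeries.coeff_mk, map_sum]
    have hterm : ∀ j, (PowerSeries.coeff (R := ℝ) n) (PowerSeries.C (R := ℝ) ((k.choose j : ℝ) * 4^j) *
        ((PowerSeries.invOneSubPow ℝ (2*j+1)).val *
          ((PowerSeries.X:ℝ⟦X⟧)^j + (PowerSeries.X:ℝ⟦X⟧)^(j+1))))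
        = ((k.choose j:ℝ)*4^j) * (((n+j).choose (2*j):ℝ)
            + if n = 0 then 0 else ((n-1+j).choose (2*j):ℝ)) := by
      intro j
      rw [PowerSeries.coeff_C_mul, mul_add ((PowerSeries.invOneSubPow ℝ (2*j+1)).val),
        map_add, psA, psC]
    rw [Finset.sum_congr rfl (fun j _ => hterm j)]
    cases n with
    | zero =>
      rw [Finset.sum_eq_single 0]
      · simp [h0]
      · intro j _ hj
        rw [if_pos rfl, Nat.choose_eq_zero_of_lt (show 0+j < 2*j by omega)]
        simp
      · intro habs; exact absurd (Finset.mem_range.mpr (by omega)) habs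
    | succ m =>
      rw [hs m]
      conv_rhs => rw [← Finset.sum_range_reflect]
      refine Finset.sum_congr rfl fun i hi => ?_
      have hik : i ≤ k := Nat.lt_succ_iff.mp (Finset.mem_range.mp hi)
      simp only [show k+1-1-i = k-i by omega, if_neg (Nat.succ_ne_zero m),
        show m+1+(k-i) = m+(k-i)+1 by omega, show m+1-1+(k-i) = m+(k-i) by omega]
      rw [Nat.choose_symm hik]
      have h4 : (4:ℝ)^(k-i) = 2^(k-i) * 2^(k-i) := by rw [← mul_pow]; norm_num
      rw [h4]; ring
  rw [hmk, Finset.sum_mul]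
  have hrhs : ((1:ℝ⟦X⟧) + PowerSeries.X)^(2*k+1)
      = ∑ j ∈ Finset.range (k+1), (1 + PowerSeries.X) *
        ((4*PowerSeries.X)^j * ((1-PowerSeries.X)^2)^(k-j) * ((k.choose j : ℕ) : ℝ⟦X⟧)) := by
    have hb : ((4*PowerSeries.X) + (1-PowerSeries.X)^2 : ℝ⟦X⟧) = (1+PowerSeries.X)^2 := by ring
    calc ((1:ℝ⟦X⟧) + PowerSeries.X)^(2*k+1)
        = (1+PowerSeries.X) * (((1:ℝ⟦X⟧)+PowerSeries.X)^2)^k := by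
          rw [← pow_mul, ← pow_succ']
      _ = (1+PowerSeries.X) * ∑ j ∈ Finset.range (k+1),
            (4*PowerSeries.X)^j * ((1-PowerSeries.X)^2)^(k-j) * ((k.choose j : ℕ) : ℝ⟦X⟧) := by
          rw [← hb, add_pow]
      _ = _ := Finset.mul_sum _ _ _
  rw [hrhs]
  refine Finset.sum_congr rfl fun j hj => ?_
  have hjk : j ≤ k := Nat.lt_succ_iff.mp (Finset.mem_range.mp hj)
  have hpow : ((1:ℝ⟦X⟧) - PowerSeries.X)^(2*k+1)
      = (1-PowerSeries.X)^(2*j+1) * ((1-PowerSeries.X)^2)^(k-j) := by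
    rw [← pow_mul, ← pow_add]
    congr 1
    omega
  have hIv : (PowerSeries.invOneSubPow ℝ (2*j+1)).val * (1-PowerSeries.X)^(2*j+1) = 1 := by
    rw [← PowerSeries.invOneSubPow_inv_eq_one_sub_pow]
    exact (PowerSeries.invOneSubPow ℝ (2*j+1)).val_inv
  have hre : PowerSeries.C (R := ℝ) ((k.choose j : ℝ) * 4^j) *
        ((PowerSeries.invOneSubPow ℝ (2*j+1)).val *
          ((PowerSeries.X:ℝ⟦X⟧)^j + (PowerSeries.X:ℝ⟦X⟧)^(j+1))) * (1-PowerSeries.X)^(2*k+1)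
      = PowerSeries.C (R := ℝ) ((k.choose j : ℝ) * 4^j) *
          (((PowerSeries.X:ℝ⟦X⟧)^j + (PowerSeries.X:ℝ⟦X⟧)^(j+1)) * ((1-PowerSeries.X)^2)^(k-j))
        * ((PowerSeries.invOneSubPow ℝ (2*j+1)).val * (1-PowerSeries.X)^(2*j+1)) := by
    rw [hpow]; ring
  rw [hre, hIv, mul_one, map_mul, map_pow, map_natCast, map_ofNat]
  ring

lemma series_even (k : ℕ) (h : ℕ → ℝ) (h0 : h 0 = 1)
    (hs : ∀ m : ℕ, h (m+1) = ∑ i ∈ Finset.range k,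
      2*(2^(k-i) * (k.choose i : ℝ)) *
        (2^(k-1-i) * (((m+(k-1-i)+1).choose (2*(k-1-i)+1)) : ℝ))) :
    PowerSeries.mk h * (1 - PowerSeries.X)^(2*k) = (1 + PowerSeries.X)^(2*k) := by
  have hmk : PowerSeries.mk h = 1 + ∑ j ∈ Finset.range k,
      PowerSeries.C (R := ℝ) ((k.choose (j+1) : ℝ) * 4^(j+1)) *
        ((PowerSeries.invOneSubPow ℝ (2*j+2)).val * (PowerSeries.X:ℝ⟦X⟧)^(j+1)) := by
    ext n
    rw [PowerSeries.coeff_mk, map_add, map_sum]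
    have hterm : ∀ j, (PowerSeries.coeff (R := ℝ) n) (PowerSeries.C (R := ℝ) ((k.choose (j+1) : ℝ) * 4^(j+1)) *
        ((PowerSeries.invOneSubPow ℝ (2*j+2)).val * (PowerSeries.X:ℝ⟦X⟧)^(j+1)))
        = ((k.choose (j+1):ℝ)*4^(j+1)) * ((n+j).choose (2*j+1):ℝ) := by
      intro j
      rw [PowerSeries.coeff_C_mul, psB]
    rw [Finset.sum_congr rfl (fun j _ => hterm j)]
    cases n with
    | zero =>
      rw [h0, PowerSeries.coeff_zero_eq_constantCoeff, map_one]
      rw [Finset.sum_eq_zero, add_zero]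
      intro j _
      rw [Nat.choose_eq_zero_of_lt (show 0+j < 2*j+1 by omega)]
      simp
    | succ m =>
      rw [hs m]
      have hc1 : (PowerSeries.coeff (R := ℝ) (m+1)) (1:ℝ⟦X⟧) = 0 := by
        rw [PowerSeries.coeff_one, if_neg (Nat.succ_ne_zero m)]
      rw [hc1, zero_add]
      conv_rhs => rw [← Finset.sum_range_reflect]
      refine Finset.sum_congr rfl fun i hi => ?_
      have hik : i < k := Finset.mem_range.mp hi
      simp only [show k-1-i+1 = k-i by omega, show m+1+(k-1-i) = m+(k-1-i)+1 by omega]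
      rw [Nat.choose_symm (by omega : i ≤ k)]
      have h4l : (4:ℝ)^(k-1-i) = 2^(k-1-i)*2^(k-1-i) := by rw [← mul_pow]; norm_num
      rw [show k-i = k-1-i+1 by omega, pow_succ, pow_succ, h4l]
      ring
  rw [hmk, add_mul, Finset.sum_mul, one_mul]
  have hb : ((4*PowerSeries.X) + (1-PowerSeries.X)^2 : ℝ⟦X⟧) = (1+PowerSeries.X)^2 := by ring
  have hrhs : ((1:ℝ⟦X⟧) + PowerSeries.X)^(2*k)
      = (∑ j ∈ Finset.range k,
          (4*PowerSeries.X)^(j+1) * ((1-PowerSeries.X)^2)^(k-(j+1)) * ((k.choose (j+1) : ℕ) : ℝ⟦X⟧))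
        + (4*PowerSeries.X)^0 * ((1-PowerSeries.X)^2)^(k-0) * ((k.choose 0 : ℕ) : ℝ⟦X⟧) := by
    rw [pow_mul, ← hb, add_pow, Finset.sum_range_succ']
  rw [hrhs]
  rw [add_comm ((1-PowerSeries.X:ℝ⟦X⟧)^(2*k))]
  congr 1
  · refine Finset.sum_congr rfl fun j hj => ?_
    have hjk : j < k := Finset.mem_range.mp hj
    have hpow : ((1:ℝ⟦X⟧) - PowerSeries.X)^(2*k)
        = (1-PowerSeries.X)^(2*j+2) * ((1-PowerSeries.X)^2)^(k-(j+1)) := by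
      rw [← pow_mul, ← pow_add]
      congr 1
      omega
    have hIv : (PowerSeries.invOneSubPow ℝ (2*j+2)).val * (1-PowerSeries.X)^(2*j+2) = 1 := by
      rw [← PowerSeries.invOneSubPow_inv_eq_one_sub_pow]
      exact (PowerSeries.invOneSubPow ℝ (2*j+2)).val_inv
    have hre : PowerSeries.C (R := ℝ) ((k.choose (j+1) : ℝ) * 4^(j+1)) *
          ((PowerSeries.invOneSubPow ℝ (2*j+2)).val * (PowerSeries.X:ℝ⟦X⟧)^(j+1))
            * (1-PowerSeries.X)^(2*k)
        = PowerSeries.C (R := ℝ) ((k.choose (j+1) : ℝ) * 4^(j+1)) *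
            ((PowerSeries.X:ℝ⟦X⟧)^(j+1) * ((1-PowerSeries.X)^2)^(k-(j+1)))
          * ((PowerSeries.invOneSubPow ℝ (2*j+2)).val * (1-PowerSeries.X)^(2*j+2)) := by
      rw [hpow]; ring
    rw [hre, hIv, mul_one, map_mul, map_pow, map_natCast, map_ofNat]
    ring
  · rw [← pow_mul]
    simp

lemma derivEvalTaylor (N : ℕ) (p : ℝ[X]) :
    ((Polynomial.derivative)^[N] p).eval 1 / (N.factorial : ℝ)
    = (Polynomial.taylor (1:ℝ) p).coeff N := by
  have hfac : ((N.factorial : ℝ)) ≠ 0 := Nat.cast_ne_zero.mpr (Nat.factorial_ne_zero _)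
  rw [Polynomial.taylor_coeff]
  have h1 : (Polynomial.derivative (R:=ℝ))^[N] p = N.factorial • Polynomial.hasseDeriv N p := by
    rw [← Polynomial.factorial_smul_hasseDeriv]
    rfl
  rw [h1, nsmul_eq_mul, Polynomial.eval_mul, Polynomial.eval_natCast,
    mul_div_cancel_left₀ _ hfac]

lemma identify_odd (k n : ℕ) (p : ℝ[X])
    (hev : ∀ θ ∈ Set.Icc (0:ℝ) π, p.eval (Real.cos θ)
      = 2 * (-1:ℝ)^k * Real.sin θ ^ (2*k) * Real.cos ((n:ℝ)*θ)) :
    p = 2*((Polynomial.X^2-1)^k * Polynomial.Chebyshev.T ℝ (n:ℤ)) := by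
  apply Polynomial.eq_of_infinite_eval_eq
  refine Set.Infinite.mono ?_ (Set.Icc_infinite (show (-1:ℝ) < 1 by norm_num))
  rintro x ⟨hx1, hx2⟩
  have hθ : Real.arccos x ∈ Set.Icc (0:ℝ) π := ⟨Real.arccos_nonneg x, Real.arccos_le_pi x⟩
  have hcos : Real.cos (Real.arccos x) = x := Real.cos_arccos hx1 hx2
  have hsin : Real.sin (Real.arccos x) = Real.sqrt (1 - x^2) := Real.sin_arccos x
  have h := hev (Real.arccos x) hθ
  rw [hcos, hsin] at h
  have hs2 : Real.sqrt (1-x^2) ^ (2*k) = (1-x^2)^k := by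
    rw [pow_mul, Real.sq_sqrt (by nlinarith)]
  have hT : (Polynomial.Chebyshev.T ℝ (n:ℤ)).eval x = Real.cos ((n:ℝ) * Real.arccos x) := by
    conv_lhs => rw [← hcos]
    rw [Polynomial.Chebyshev.T_real_cos]
    push_cast
    ring_nf
  simp only [Set.mem_setOf_eq]
  rw [h, hs2]
  simp only [Polynomial.eval_mul, Polynomial.eval_pow, Polynomial.eval_sub,
    Polynomial.eval_one, Polynomial.eval_X, Polynomial.eval_ofNat, hT]
  have hm : ((-1:ℝ))^k * (1-x^2)^k = (x^2-1)^k := by rw [← mul_pow]; congr 1; ring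
  rw [← hm]
  ring

lemma identify_even (k m : ℕ) (hk : 1 ≤ k) (p : ℝ[X])
    (hev : ∀ θ ∈ Set.Icc (0:ℝ) π, p.eval (Real.cos θ)
      = 2 * (-1:ℝ)^(k-1) * Real.sin θ ^ (2*k-1) * (-Real.sin (((m:ℝ)+1)*θ))) :
    p = 2*((Polynomial.X^2-1)^k * Polynomial.Chebyshev.U ℝ (m:ℤ)) := by
  apply Polynomial.eq_of_infinite_eval_eq
  refine Set.Infinite.mono ?_ (Set.Icc_infinite (show (-1:ℝ) < 1 by norm_num))
  rintro x ⟨hx1, hx2⟩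
  have hθ : Real.arccos x ∈ Set.Icc (0:ℝ) π := ⟨Real.arccos_nonneg x, Real.arccos_le_pi x⟩
  have hcos : Real.cos (Real.arccos x) = x := Real.cos_arccos hx1 hx2
  have hsin : Real.sin (Real.arccos x) = Real.sqrt (1 - x^2) := Real.sin_arccos x
  have h := hev (Real.arccos x) hθ
  rw [hcos, hsin] at h
  have hss : Real.sqrt (1-x^2) * Real.sqrt (1-x^2) = 1-x^2 :=
    Real.mul_self_sqrt (by nlinarith)
  have hU := Polynomial.Chebyshev.U_real_cos (Real.arccos x) (m:ℤ)
  rw [hcos, hsin] at hU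
  push_cast at hU
  rw [show 2*k-1 = 2*(k-1)+1 by omega, pow_succ, pow_mul,
    Real.sq_sqrt (by nlinarith : (0:ℝ) ≤ 1-x^2), ← hU] at h
  simp only [Set.mem_setOf_eq]
  rw [h]
  simp only [Polynomial.eval_mul, Polynomial.eval_pow, Polynomial.eval_sub,
    Polynomial.eval_one, Polynomial.eval_X, Polynomial.eval_ofNat]
  have hxk : (x^2-1)^k = ((-1:ℝ)^(k-1) * (1-x^2)^(k-1)) * ((-1)*(1-x^2)) := by
    have h1 : ((-1:ℝ))^(k-1) * (1-x^2)^(k-1) = (x^2-1)^(k-1) := by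
      rw [← mul_pow]; congr 1; ring
    rw [h1, show ((-1:ℝ))*(1-x^2) = x^2-1 by ring, ← pow_succ,
      show k-1+1 = k by omega]
  rw [hxk]
  linear_combination (-(2*(-1:ℝ)^(k-1)*((1-x^2)^(k-1))*((Polynomial.Chebyshev.U ℝ (m:ℤ)).eval x))) * hss

/-- Generating function for `h_{n,d} = H_{n,d}^{(d-1)}(1)`:
if `H n` is the polynomial in `u = cos θ` with
`H_{n,d}(cos θ) = 2(-1)^{⌊(d-1)/2⌋} (sin θ)^{d-1}·(-sin(nθ))` for `d` even and
`… · cos(nθ)` for `d` odd (`n ≥ 1`), and `h_{0,d}/(d-1)! = 1`, then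
`∑_{n≥0} h_{n,d} rⁿ/(d-1)! = (1+r)^d/(1-r)^d` as formal power series over `ℝ`. -/
theorem genfun_h (d : ℕ) (hd : 1 ≤ d) (H : ℕ → Polynomial ℝ)
    (hH : ∀ n : ℕ, 1 ≤ n → ∀ θ ∈ Set.Icc (0 : ℝ) π,
      (H n).eval (Real.cos θ) =
        2 * (-1 : ℝ) ^ ((d - 1) / 2) * (Real.sin θ) ^ (d - 1) *
          (if Even d then -Real.sin (n * θ) else Real.cos (n * θ))) :
    (PowerSeries.mk fun n =>
        if n = 0 then (1 : ℝ)
        else ((Polynomial.derivative)^[d - 1] (H n)).eval 1 / ((d - 1).factorial : ℝ)) =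
      (1 + PowerSeries.X) ^ d * ((1 - PowerSeries.X : PowerSeries ℝ)⁻¹) ^ d := by
  set f : ℕ → ℝ := fun n =>
      if n = 0 then (1 : ℝ)
      else ((Polynomial.derivative)^[d - 1] (H n)).eval 1 / ((d - 1).factorial : ℝ) with hf
  have h0 : f 0 = 1 := by simp [hf]
  have hsucc : ∀ m : ℕ, f (m+1) = (Polynomial.taylor (1:ℝ) (H (m+1))).coeff (d-1) := by
    intro m
    simp only [hf]
    rw [if_neg (Nat.succ_ne_zero m)]
    exact derivEvalTaylor _ _
  suffices key : PowerSeries.mk f * (1-PowerSeries.X)^d = (1+PowerSeries.X)^d by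
    have hinv : (1 - PowerSeries.X : ℝ⟦X⟧) * (1 - PowerSeries.X:ℝ⟦X⟧)⁻¹ = 1 :=
      PowerSeries.mul_inv_cancel _ (by simp)
    calc PowerSeries.mk f
        = PowerSeries.mk f * ((1-PowerSeries.X) * (1-PowerSeries.X:ℝ⟦X⟧)⁻¹)^d := by
          rw [hinv, one_pow, mul_one]
      _ = (PowerSeries.mk f * (1-PowerSeries.X)^d) * ((1-PowerSeries.X:ℝ⟦X⟧)⁻¹)^d := by
          rw [mul_pow]; ring
      _ = _ := by rw [key]
  rcases Nat.even_or_odd d with hpar | hpar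
  · obtain ⟨k, hk⟩ := hpar
    have hk1 : 1 ≤ k := by omega
    have hs : ∀ m : ℕ, f (m+1) = ∑ i ∈ Finset.range k,
        2*(2^(k-i) * (k.choose i : ℝ)) *
          (2^(k-1-i) * (((m+(k-1-i)+1).choose (2*(k-1-i)+1)) : ℝ)) := by
      intro m
      have hHm : H (m+1) = 2*((Polynomial.X^2-1)^k * Polynomial.Chebyshev.U ℝ (m:ℤ)) := by
        apply identify_even k m hk1
        intro θ hθ
        have hth := hH (m+1) (by omega) θ hθ
        rw [if_pos ⟨k, hk⟩] at hth
        rw [hth]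
        push_cast
        rw [show (d-1)/2 = k-1 by omega, show d-1 = 2*k-1 by omega]
      rw [hsucc m, hHm, show d-1 = k + (k-1) by omega, keycoeff,
        show k-1+1 = k by omega]
      refine Finset.sum_congr rfl fun i _ => ?_
      rw [tU m (k-1-i)]
    rw [show d = 2*k by omega]
    exact series_even k f h0 hs
  · obtain ⟨k, hk⟩ := hpar
    have hs : ∀ m : ℕ, f (m+1) = ∑ i ∈ Finset.range (k+1),
        2*(2^(k-i) * (k.choose i : ℝ)) *
          (2^(k-i) * (((m+(k-i)+1).choose (2*(k-i)) : ℝ) + ((m+(k-i)).choose (2*(k-i)) : ℝ))/2) := by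
      intro m
      have hHm : H (m+1) = 2*((Polynomial.X^2-1)^k *
          Polynomial.Chebyshev.T ℝ ((m+1:ℕ):ℤ)) := by
        apply identify_odd k (m+1)
        intro θ hθ
        have hth := hH (m+1) (by omega) θ hθ
        have hne : ¬ Even d := by rw [Nat.even_iff]; omega
        rw [if_neg hne] at hth
        rw [hth]
        push_cast
        rw [show (d-1)/2 = k by omega, show d-1 = 2*k by omega]
      rw [hsucc m, hHm, show d-1 = k + k by omega, keycoeff]
      refine Finset.sum_congr rfl fun i _ => ?_
      rw [show ((m+1:ℕ):ℤ) = (m:ℤ)+1 by push_cast; ring, tT m (k-i)]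
    rw [show d = 2*k+1 by omega]
    exact series_odd k f h0 hs
end
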